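/- arXiv:1907.03142 — 3 statements merged into one kernel-verified Lean document; each statement's English description precedes it below -/
import Mathlib

section
/- Let κ be an infinite cardinal and let T be a well-pruned κ⁺-Aronszajn tree. Then for every node t ∈ T there exists an ordinal α with ht(t) < α < κ⁺ such that the set {y ∈ T : t < y and ht(y) = α} of nodes of T above t at level α has cardinality exactly κ (in particular, the α-th level of T has cardinality exactly κ). -/
/-!
Above every node `x` the tree splits: otherwise choosing one node per level, below `x` or
above `x` with a strict extension, yields a cofinal branch. A split above a node of level `γ`
yields, at every sufficiently high level `δ`, two nodes above `t` which agree below `γ` and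
disagree below some `σ(γ) < κ⁺`. Running through `κ` levels `γ_i` with `σ(γ_i) ≤ γ_j` for
`i < j` (possible below `κ⁺` because `κ⁺` is regular) and letting `δ` lie above all of them,
the pairs obtained for different `i` are distinct, so level `δ` above `t` carries `κ` pairs of
nodes, hence `κ` nodes.
-/

open Cardinal

/-- `ht` is the height function of the tree `(T, <)`: for every `x : T`, the map `ht`
restricted to the set `{y | y < x}` of predecessors of `x` is an order isomorphism onto
the ordinals below `ht x`; equivalently, the predecessors of each node are linearly
ordered and well-ordered by `<` with order type `ht x`. -/
structure IsHeightFunction (T : Type*) [PartialOrder T] (ht : T → Ordinal) : Prop where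
  /-- `ht` is strictly increasing on chains of the tree. -/
  lt_of_lt : ∀ {y x : T}, y < x → ht y < ht x
  /-- among predecessors of a fixed node, smaller height means smaller node
  (so predecessors are linearly ordered and `ht` reflects the order). -/
  lt_of_ht_lt : ∀ {x y z : T}, y < x → z < x → ht y < ht z → y < z
  /-- every ordinal below `ht x` is the height of some predecessor of `x`. -/
  surj_on : ∀ x : T, ∀ β < ht x, ∃ y : T, y < x ∧ ht y = β

open Order Set

universe u

namespace Ordinal

noncomputable def jumpSeq (F : Ordinal.{u} → Ordinal.{u}) (a : Ordinal.{u}) :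
    Ordinal.{u} → Ordinal.{u}
  | i => a ⊔ ⨆ j : Iio i, F (jumpSeq F a j)
termination_by i => i
decreasing_by exact j.2

variable {F : Ordinal.{u} → Ordinal.{u}} {a : Ordinal.{u}}

theorem le_jumpSeq (i : Ordinal) : a ≤ jumpSeq F a i := by
  rw [jumpSeq]
  exact le_sup_left

theorem apply_jumpSeq_le {i j : Ordinal} (hij : i < j) : F (jumpSeq F a i) ≤ jumpSeq F a j := by
  rw [jumpSeq.eq_1 F a j]
  exact le_sup_of_le_right <|
    le_ciSup (f := fun k : Iio j => F (jumpSeq F a k)) bddAbove_of_small ⟨i, hij⟩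

theorem jumpSeq_lt {Λ : Ordinal.{u}} (hF : ∀ γ < Λ, F γ < Λ) (ha : a < Λ) {i : Ordinal}
    (hi : i.card < Λ.cof) : jumpSeq F a i < Λ := by
  induction i using WellFoundedLT.induction with
  | ind i ih =>
    rw [jumpSeq]
    refine sup_lt_iff.2 ⟨ha, lift_iSup_lt_of_lt_cof ?_ fun j => hF _ (ih j j.2 ?_)⟩
    · rw [Cardinal.mk_Iio_ordinal, Cardinal.lift_lift, ← lift_cof]
      exact Cardinal.lift_lt.2 hi
    · exact (card_le_card j.2.le).trans_lt hi

end Ordinal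

section Tree

variable {T : Type u} [PartialOrder T]

def IsWellPruned (ht : T → Ordinal.{u}) (Λ : Ordinal.{u}) : Prop :=
  ∀ x : T, ∀ α : Ordinal, ht x < α → α < Λ → ∃ y : T, x < y ∧ ht y = α

def HasCofinalBranch (ht : T → Ordinal.{u}) (Λ : Ordinal.{u}) : Prop :=
  ∃ B : Set T, IsChain (· ≤ ·) B ∧ ∀ α < Λ, ∃ x ∈ B, ht x = α

/-- `IsHeightFunction` allows distinct nodes of one level with the same predecessors, so
`u ≠ v` would not witness a split; instead some `q < u` is not below `v`. -/
def SplitsAbove (ht : T → Ordinal.{u}) (x : T) : Prop :=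
  ∃ u v q : T, x < u ∧ x < v ∧ ht u = ht v ∧ q < u ∧ ¬ q < v

def SplitsBetween (ht : T → Ordinal.{u}) (γ σ : Ordinal.{u}) (z₁ z₂ : T) : Prop :=
  (∀ w, ht w < γ → w < z₁ → w < z₂) ∧ ∃ q, ht q < σ ∧ q < z₁ ∧ ¬ q < z₂

variable {ht : T → Ordinal.{u}} {Λ : Ordinal.{u}}

theorem SplitsBetween.lt {γ σ γ' σ' : Ordinal} {z₁ z₂ : T} (h : SplitsBetween ht γ σ z₁ z₂)
    (h' : SplitsBetween ht γ' σ' z₁ z₂) : γ' < σ := by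
  obtain ⟨q, hqσ, hqz₁, hqz₂⟩ := h.2
  by_contra! hσγ'
  exact hqz₂ (h'.1 q (hqσ.trans_le hσγ') hqz₁)

variable (hht : IsHeightFunction T ht)
include hht

theorem IsHeightFunction.lt_of_le_of_le_of_ht_lt {a b z : T} (ha : a ≤ z) (hb : b ≤ z)
    (hab : ht a < ht b) : a < b := by
  rcases hb.lt_or_eq with hb | rfl
  · have ha' : a < z := ha.lt_of_ne (by rintro rfl; exact (hab.trans (hht.lt_of_lt hb)).false)
    exact hht.lt_of_ht_lt ha' hb hab
  · exact ha.lt_of_ne fun h => hab.ne (congrArg ht h)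

theorem IsHeightFunction.monotone : Monotone ht := fun _ _ h =>
  h.eq_or_lt.elim (fun h => h ▸ le_rfl) fun h => (hht.lt_of_lt h).le

variable (hΛ : IsSuccLimit Λ) (hlt : ∀ x, ht x < Λ) (hpruned : IsWellPruned ht Λ)
include hΛ hlt hpruned

theorem lt_of_not_splitsAbove {x y y' w w' : T} (hns : ¬ SplitsAbove ht x) (hxy : x < y)
    (hxy' : x < y') (hyw : y < w) (hy'w' : y' < w') (hyy' : ht y < ht y') : y < y' := by
  have hℓ : succ (ht w ⊔ ht w') < Λ := hΛ.succ_lt (max_lt (hlt w) (hlt w'))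
  obtain ⟨a, hwa, ha⟩ := hpruned w _ (lt_succ_of_le le_sup_left) hℓ
  obtain ⟨b, hw'b, hb⟩ := hpruned w' _ (lt_succ_of_le le_sup_right) hℓ
  have hyb : y < b := by
    by_contra hyb
    exact hns ⟨a, b, y, hxy.trans (hyw.trans hwa), hxy'.trans (hy'w'.trans hw'b), ha.trans hb.symm,
      hyw.trans hwa, hyb⟩
  exact hht.lt_of_ht_lt hyb (hy'w'.trans hw'b) hyy'

theorem splitsAbove_of_not_hasCofinalBranch (hnb : ¬ HasCofinalBranch ht Λ) (x : T) :
    SplitsAbove ht x := by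
  by_contra hns
  let Admissible : T → Prop := fun y => y ≤ x ∨ x < y ∧ ∃ w, y < w
  have exists_admissible : ∀ α < Λ, ∃ y, ht y = α ∧ Admissible y := by
    intro α hα
    rcases lt_trichotomy α (ht x) with h | rfl | h
    · obtain ⟨y, hyx, rfl⟩ := hht.surj_on x α h
      exact ⟨y, rfl, .inl hyx.le⟩
    · exact ⟨x, rfl, .inl le_rfl⟩
    · obtain ⟨w, hxw, hw⟩ := hpruned x (succ α) (h.trans (lt_succ α)) (hΛ.succ_lt hα)
      obtain ⟨y, hyw, rfl⟩ := hht.surj_on w α (hw ▸ lt_succ α)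
      exact ⟨y, rfl, .inr ⟨hht.lt_of_ht_lt hxw hyw h, w, hyw⟩⟩
  have lt_of_admissible {y y' : T} (hy : Admissible y) (hy' : Admissible y')
      (hyy' : ht y < ht y') : y < y' := by
    rcases hy' with hy'x | ⟨hxy', w', hy'w'⟩
    · have hyx : y ≤ x := hy.resolve_right fun ⟨hxy, _⟩ =>
        ((hht.lt_of_lt hxy).trans (hyy'.trans_le (hht.monotone hy'x))).false
      exact hht.lt_of_le_of_le_of_ht_lt hyx hy'x hyy'
    · rcases hy with hyx | ⟨hxy, w, hyw⟩
      · exact hyx.trans_lt hxy'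
      · exact lt_of_not_splitsAbove hht hΛ hlt hpruned hns hxy hxy' hyw hy'w' hyy'
  choose c hc using exists_admissible
  have hc_lt {α β : Iio Λ} (h : α < β) : c α α.2 < c β β.2 :=
    lt_of_admissible (hc α α.2).2 (hc β β.2).2 (by rw [(hc α α.2).1, (hc β β.2).1]; exact h)
  refine hnb ⟨range fun α : Iio Λ => c α α.2, ?_, fun α hα => ⟨c α hα, ⟨⟨α, hα⟩, rfl⟩, (hc α hα).1⟩⟩
  rintro _ ⟨α, rfl⟩ _ ⟨β, rfl⟩ hne
  rcases lt_trichotomy α β with h | rfl | h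
  · exact .inl (hc_lt h).le
  · exact absurd rfl hne
  · exact .inr (hc_lt h).le

theorem SplitsAbove.exists_splitsBetween {x : T} (hx : SplitsAbove ht x) :
    ∃ σ < Λ, ∀ δ, σ ≤ δ → δ < Λ → ∃ z₁ z₂ : T,
      x < z₁ ∧ x < z₂ ∧ ht z₁ = δ ∧ ht z₂ = δ ∧ SplitsBetween ht (ht x) σ z₁ z₂ := by
  obtain ⟨u, v, q, hxu, hxv, huv, hqu, hqv⟩ := hx
  refine ⟨succ (ht u), hΛ.succ_lt (hlt u), fun δ hδ hδΛ => ?_⟩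
  have hu : ht u < δ := succ_le_iff.1 hδ
  obtain ⟨z₁, huz₁, hz₁⟩ := hpruned u δ hu hδΛ
  obtain ⟨z₂, hvz₂, hz₂⟩ := hpruned v δ (huv ▸ hu) hδΛ
  refine ⟨z₁, z₂, hxu.trans huz₁, hxv.trans hvz₂, hz₁, hz₂, fun w hw hwz₁ => ?_,
    q, (hht.lt_of_lt hqu).trans (lt_succ _), hqu.trans huz₁, fun hqz₂ => hqv ?_⟩
  · exact (hht.lt_of_ht_lt hwz₁ (hxu.trans huz₁) hw).trans (hxv.trans hvz₂)
  · exact hht.lt_of_ht_lt hqz₂ hvz₂ (huv ▸ hht.lt_of_lt hqu)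

theorem exists_splitsBetween_above (hsplit : ∀ x, SplitsAbove ht x) (t : T) :
    ∃ σ : Ordinal → Ordinal, (∀ γ, σ γ < Λ) ∧ ∀ γ δ, ht t < γ → γ < Λ → σ γ ≤ δ → δ < Λ →
      ∃ z₁ z₂ : T, (t < z₁ ∧ ht z₁ = δ) ∧ (t < z₂ ∧ ht z₂ = δ) ∧
        SplitsBetween ht γ (σ γ) z₁ z₂ := by
  have h (γ : Ordinal) : ∃ σ < Λ, ht t < γ → γ < Λ → ∀ δ, σ ≤ δ → δ < Λ → ∃ z₁ z₂ : T,
      (t < z₁ ∧ ht z₁ = δ) ∧ (t < z₂ ∧ ht z₂ = δ) ∧ SplitsBetween ht γ σ z₁ z₂ := by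
    by_cases hγ : ht t < γ ∧ γ < Λ
    · obtain ⟨x, htx, rfl⟩ := hpruned t γ hγ.1 hγ.2
      obtain ⟨σ, hσ, hx⟩ := (hsplit x).exists_splitsBetween hht hΛ hlt hpruned
      refine ⟨σ, hσ, fun _ _ δ hσδ hδ => ?_⟩
      obtain ⟨z₁, z₂, hxz₁, hxz₂, hz₁, hz₂, hz⟩ := hx δ hσδ hδ
      exact ⟨z₁, z₂, ⟨htx.trans hxz₁, hz₁⟩, ⟨htx.trans hxz₂, hz₂⟩, hz⟩
    · exact ⟨ht t, hlt t, fun h₁ h₂ => (hγ ⟨h₁, h₂⟩).elim⟩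
  choose σ hσΛ hσ using h
  exact ⟨σ, hσΛ, fun γ δ h₁ h₂ => hσ γ h₁ h₂ δ⟩

end Tree

theorem wellPruned_aronszajn_exists_large_level_general (κ : Cardinal) (hκ : ℵ₀ ≤ κ)
    {T : Type*} [PartialOrder T] (ht : T → Ordinal)
    (hht : IsHeightFunction T ht)
    (hlt : ∀ x : T, ht x < (Order.succ κ).ord)
    (hlevels_card : ∀ α : Ordinal, #{x : T // ht x = α} ≤ κ)
    (hpruned : ∀ x : T, ∀ α : Ordinal, ht x < α → α < (Order.succ κ).ord →
      ∃ y : T, x < y ∧ ht y = α)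
    (haronszajn : ¬ ∃ B : Set T, IsChain (· ≤ ·) B ∧
      ∀ α < (Order.succ κ).ord, ∃ x ∈ B, ht x = α)
    (t : T) :
    ∃ α : Ordinal, ht t < α ∧ α < (Order.succ κ).ord ∧
      #{y : T // t < y ∧ ht y = α} = κ ∧ #{y : T // ht y = α} = κ := by
  set Λ := (succ κ).ord
  have hΛ : IsSuccLimit Λ := isSuccLimit_ord (hκ.trans (le_succ κ))
  have hcof : κ.ord.card < Λ.cof := by
    rw [(isRegular_succ hκ).cof_ord, card_ord]
    exact lt_succ κ
  obtain ⟨σ, hσΛ, hσ⟩ := exists_splitsBetween_above hht hΛ hlt hpruned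
    (splitsAbove_of_not_hasCofinalBranch hht hΛ hlt hpruned haronszajn) t
  set β := Ordinal.jumpSeq σ (succ (ht t))
  have hβ (i : Ordinal) (hi : i ≤ κ.ord) : ht t < β i ∧ β i < Λ :=
    ⟨succ_le_iff.1 (Ordinal.le_jumpSeq i), Ordinal.jumpSeq_lt (fun γ _ => hσΛ γ)
      (hΛ.succ_lt (hlt t)) ((Ordinal.card_le_card hi).trans_lt hcof)⟩
  set δ := β κ.ord
  let A := {y : T // t < y ∧ ht y = δ}
  have hpair (i : Iio κ.ord) : ∃ z : A × A, SplitsBetween ht (β i) (σ (β i)) z.1 z.2 := by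
    obtain ⟨z₁, z₂, hz₁, hz₂, hz⟩ := hσ (β i) δ (hβ i i.2.le).1 (hβ i i.2.le).2
      (Ordinal.apply_jumpSeq_le i.2) (hβ _ le_rfl).2
    exact ⟨(⟨z₁, hz₁⟩, ⟨z₂, hz₂⟩), hz⟩
  choose z hz using hpair
  have hz_inj : Function.Injective z := .of_lt_imp_ne fun i j hij hzij =>
    ((hzij ▸ hz i).lt (hz j)).not_ge (Ordinal.apply_jumpSeq_le hij)
  have hκA : κ ≤ #A := by
    have hκAA := lift_mk_le_lift_mk_of_injective hz_inj
    rw [mk_Iio_ordinal, card_ord, lift_lift, lift_le, mk_prod, lift_id] at hκAA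
    exact not_lt.1 fun hA => (hκAA.trans_lt (mul_lt_of_lt hκ hA hA)).false
  have hAδ : #A ≤ #{y : T // ht y = δ} := mk_subtype_mono fun _ hy => hy.2
  exact ⟨δ, (hβ _ le_rfl).1, (hβ _ le_rfl).2, (hAδ.trans (hlevels_card δ)).antisymm hκA,
    (hlevels_card δ).antisymm (hκA.trans hAδ)⟩

/-- Let `κ` be an infinite cardinal and let `T` be a well-pruned `κ⁺`-Aronszajn tree
(all elements have height `< κ⁺`, every level `α < κ⁺` is nonempty, every level has
cardinality at most `κ`, `T` is well-pruned, and `T` has no cofinal branch).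
Then for every node `t ∈ T` there is an ordinal `α` with `ht t < α < κ⁺` such that the
set of nodes of `T` above `t` at level `α` has cardinality exactly `κ` (in particular
the `α`-th level of `T` has cardinality exactly `κ`). -/
theorem wellPruned_aronszajn_exists_large_level (κ : Cardinal) (hκ : ℵ₀ ≤ κ)
    {T : Type*} [PartialOrder T] (ht : T → Ordinal)
    (hht : IsHeightFunction T ht)
    (hlt : ∀ x : T, ht x < (Order.succ κ).ord)
    (hlevels_ne : ∀ α < (Order.succ κ).ord, ∃ x : T, ht x = α)
    (hlevels_card : ∀ α : Ordinal, #{x : T // ht x = α} ≤ κ)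
    (hpruned : ∀ x : T, ∀ α : Ordinal, ht x < α → α < (Order.succ κ).ord →
      ∃ y : T, x < y ∧ ht y = α)
    (haronszajn : ¬ ∃ B : Set T, IsChain (· ≤ ·) B ∧
      ∀ α < (Order.succ κ).ord, ∃ x ∈ B, ht x = α)
    (t : T) :
    ∃ α : Ordinal, ht t < α ∧ α < (Order.succ κ).ord ∧
      #{y : T // t < y ∧ ht y = α} = κ ∧ #{y : T // ht y = α} = κ :=
  wellPruned_aronszajn_exists_large_level_general κ hκ ht hht hlt hlevels_card hpruned haronszajn t
end

section
/- Let κ be an infinite cardinal and let T be a well-pruned tree of height κ⁺ such that every level of T has cardinality strictly less than κ. Then T has a cofinal branch, i.e., there is a chain B ⊆ T containing an element of every level α < κ⁺. -/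
open Cardinal

/-!
Write `θ = κ⁺`. Levels have size `< κ < cf θ`, so some `μ < κ` bounds the size of unboundedly
many levels; fix a regular `ν` with `μ < ν ≤ κ` and, for `δ < θ`, such a small level `h δ > δ`.
If `cf δ = ν`, level `h δ` carries fewer than `ν` pairs of nodes, so some `γ < δ` is a threshold:
nodes of level `h δ` whose predecessors agree below `γ` agree below `δ`. A weak Fodor argument
makes `γ` independent of `δ` on an unbounded set of `δ`, and pigeonhole on level `γ` gives a
common predecessor `z` of chosen nodes `t δ` of level `h δ`. For two such `δ < δ'` with
`h δ < δ'`, the predecessor of `t δ'` on level `h δ` lies above `z`, hence every predecessor of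
`t δ` below level `δ` lies below `t δ'`. Picking one such predecessor on each level yields the
branch.
-/

open Ordinal Order Set

universe u v

def UnboundedBelow (Λ : Ordinal.{u}) (A : Set Ordinal.{u}) : Prop :=
  ∀ β < Λ, ∃ δ ∈ A, β < δ ∧ δ < Λ

theorem UnboundedBelow.mono {Λ : Ordinal.{u}} {A B : Set Ordinal.{u}} (hA : UnboundedBelow Λ A)
    (hAB : A ⊆ B) : UnboundedBelow Λ B := fun β hβ ↦
  let ⟨δ, hδA, hβδ, hδΛ⟩ := hA β hβ
  ⟨δ, hAB hδA, hβδ, hδΛ⟩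

theorem UnboundedBelow.exists_fiber {Λ : Ordinal.{u}} {A : Set Ordinal.{u}} {ι : Type v}
    (hA : UnboundedBelow Λ A) (hι : Cardinal.lift.{u} #ι < Cardinal.lift.{v} Λ.cof)
    (R : Ordinal.{u} → ι → Prop) (hR : ∀ δ ∈ A, δ < Λ → ∃ i, R δ i) :
    ∃ i, UnboundedBelow Λ {δ ∈ A | R δ i} := by
  by_contra! hbdd
  simp only [UnboundedBelow, not_forall, not_exists, not_and, not_lt] at hbdd
  choose b hbΛ hb using hbdd
  obtain ⟨δ, hδA, hbδ, hδΛ⟩ :=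
    hA (⨆ i, b i) (lift_iSup_lt_of_lt_cof (by rwa [← lift_cof]) hbΛ)
  obtain ⟨i, hi⟩ := hR δ hδA hδΛ
  have hbAbove : BddAbove (range b) := ⟨Λ, by rintro _ ⟨j, rfl⟩; exact (hbΛ j).le⟩
  exact (hb i δ ⟨hδA, hi⟩ ((le_ciSup hbAbove i).trans_lt hbδ)).not_gt hδΛ

theorem exists_unboundedBelow_le_of_forall_lt {θ κ : Cardinal.{u}} (hθ : θ.IsRegular)
    (hκθ : κ < θ) (c : Ordinal.{u} → Cardinal.{u}) (hc : ∀ α, c α < κ) :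
    ∃ μ < κ, UnboundedBelow θ.ord {α | c α ≤ μ} := by
  have huniv : UnboundedBelow θ.ord univ := fun β hβ ↦
    ⟨β + 1, trivial, lt_add_one β, (isSuccLimit_ord hθ.aleph0_le).add_one_lt hβ⟩
  obtain ⟨⟨o, ho⟩, h⟩ := huniv.exists_fiber (ι := Iio κ.ord)
    (by rwa [Cardinal.mk_Iio_ordinal, card_ord, Cardinal.lift_lift, hθ.cof_ord, Cardinal.lift_lt])
    (fun α o ↦ c α ≤ o.1.card) fun α _ _ ↦ ⟨⟨(c α).ord, ord_lt_ord.2 (hc α)⟩, (card_ord _).ge⟩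
  exact ⟨o.card, lt_ord.1 ho, h.mono fun _ hδ ↦ hδ.2⟩

theorem Cardinal.exists_isRegular_lt_le {μ κ : Cardinal} (hκ : ℵ₀ ≤ κ) (hμκ : μ < κ) :
    ∃ ν, ν.IsRegular ∧ μ < ν ∧ ν ≤ κ := by
  rcases lt_or_ge μ ℵ₀ with h | h
  · exact ⟨ℵ₀, isRegular_aleph0, h, hκ⟩
  · exact ⟨succ μ, isRegular_succ h, lt_succ μ, succ_le_of_lt hμκ⟩

theorem exists_cof_eq_mapsTo_Iio {θ ν : Cardinal.{u}} (hθ : θ.IsRegular) (hν : ν.IsRegular)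
    (hνθ : ν < θ) {g : Ordinal.{u} → Ordinal.{u}} (hg : MapsTo g (Iio θ.ord) (Iio θ.ord)) :
    ∃ δ < θ.ord, δ.cof = ν ∧ MapsTo g (Iio δ) (Iio δ) := by
  set G : Ordinal.{u} → Ordinal.{u} := fun β ↦ ⨆ γ : Iio β, g γ + 1
  have hgG : ∀ β, ∀ γ < β, g γ < G β := fun β γ hγ ↦
    (lt_add_one _).trans_le (Ordinal.le_iSup (fun γ : Iio β ↦ g γ + 1) ⟨γ, hγ⟩)
  have hGθ : ∀ β < θ.ord, G β < θ.ord := fun β hβ ↦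
    lift_iSup_add_one_lt_of_lt_cof
      (by rwa [← lift_cof, hθ.cof_ord, Cardinal.mk_Iio_ordinal, Cardinal.lift_lift,
        Cardinal.lift_lt, ← lt_ord])
      fun γ ↦ hg (γ.2.trans hβ)
  -- Every value of the normal function `deriv G` is closed under `g`.
  have hnfp : ∀ a, MapsTo g (Iio (nfp G a)) (Iio (nfp G a)) := fun a γ hγ ↦ by
    obtain ⟨n, hn⟩ := lt_nfp_iff.1 hγ
    refine (hgG _ γ hn).trans_le ?_
    simpa only [Function.iterate_succ_apply'] using iterate_le_nfp G a (n + 1)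
  have hderiv : ∀ o, MapsTo g (Iio (deriv G o)) (Iio (deriv G o)) := by
    intro o
    induction o using limitRecOn with
    | zero => rw [deriv_zero_right]; exact hnfp 0
    | add_one o _ => rw [deriv_add_one]; exact hnfp _
    | limit o ho IH =>
      intro γ hγ
      obtain ⟨a, ha, hγa⟩ := ((isNormal_deriv G).lt_iff_exists_lt ho).1 hγ
      exact (IH a ha hγa).trans (deriv_strictMono G ha)
  refine ⟨deriv G ν.ord, deriv_lt_ord hθ (hν.aleph0_le.trans_lt hνθ).ne' hGθ (ord_lt_ord.2 hνθ),
    ?_, hderiv _⟩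
  rw [cof_map_of_isNormal (isNormal_deriv G) (isSuccLimit_ord hν.aleph0_le), hν.cof_ord]

/-- A weak Fodor lemma: a closure point of cofinality `ν` takes the place of stationarity. -/
theorem exists_unboundedBelow_of_forall_cof_eq {θ ν : Cardinal.{u}} (hθ : θ.IsRegular)
    (hν : ν.IsRegular) (hνθ : ν < θ) (P : Ordinal.{u} → Ordinal.{u} → Prop)
    (hP : ∀ δ < θ.ord, δ.cof = ν → ∃ γ < δ, P δ γ) :
    ∃ γ < θ.ord, UnboundedBelow θ.ord {δ | γ < δ ∧ P δ γ} := by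
  by_contra! hbdd
  simp only [UnboundedBelow, not_forall, not_exists, not_and, not_lt, mem_ofPred_eq] at hbdd
  choose! b hbθ hb using hbdd
  obtain ⟨δ, hδθ, hδν, hδb⟩ := exists_cof_eq_mapsTo_Iio hθ hν hνθ fun γ hγ ↦ hbθ γ hγ
  obtain ⟨γ, hγδ, hPγ⟩ := hP δ hδθ hδν
  exact (hb γ (hγδ.trans hδθ) δ ⟨hγδ, hPγ⟩ (hδb hγδ)).not_gt hδθ

section Tree

variable {T : Type u} [PartialOrder T] {ht : T → Ordinal.{u}}

def predsBelow (ht : T → Ordinal.{u}) (β : Ordinal.{u}) (x : T) : Set T :=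
  {z | z < x ∧ ht z < β}

theorem predsBelow_subset_of_le {β γ : Ordinal.{u}} {x y : T} (hβγ : β ≤ γ)
    (h : predsBelow ht γ x ⊆ predsBelow ht γ y) : predsBelow ht β x ⊆ predsBelow ht β y :=
  fun _ ⟨hzx, hzβ⟩ ↦ ⟨(h ⟨hzx, hzβ.trans_le hβγ⟩).1, hzβ⟩

theorem IsHeightFunction.predsBelow_subset_of_lt_of_lt (hht : IsHeightFunction T ht)
    {β : Ordinal.{u}} {w x y : T} (hwx : w < x) (hwy : w < y) (hβ : β ≤ ht w) :
    predsBelow ht β x ⊆ predsBelow ht β y :=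
  fun _ ⟨hzx, hzβ⟩ ↦ ⟨(hht.lt_of_ht_lt hzx hwx (hzβ.trans_le hβ)).trans hwy, hzβ⟩

theorem exists_lt_predsBelow_add_one {δ : Ordinal.{u}} (hδ : 0 < δ) (x y : T) :
    ∃ β < δ, predsBelow ht (β + 1) x ⊆ predsBelow ht (β + 1) y →
      predsBelow ht δ x ⊆ predsBelow ht δ y := by
  by_cases h : predsBelow ht δ x ⊆ predsBelow ht δ y
  · exact ⟨0, hδ, fun _ ↦ h⟩
  obtain ⟨z, ⟨hzx, hzδ⟩, hzy⟩ := not_subset.1 h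
  exact ⟨ht z, hzδ, fun hsub ↦ (hzy ⟨(hsub ⟨hzx, lt_add_one _⟩).1, hzδ⟩).elim⟩

def PredsDetermined (ht : T → Ordinal.{u}) (η γ δ : Ordinal.{u}) : Prop :=
  ∀ x y, ht x = η → ht y = η →
    predsBelow ht γ x ⊆ predsBelow ht γ y → predsBelow ht δ x ⊆ predsBelow ht δ y

theorem exists_predsDetermined {η δ : Ordinal.{u}}
    (h : #{x // ht x = η} * #{x // ht x = η} < δ.cof) : ∃ γ < δ, PredsDetermined ht η γ δ := by
  have hδ : 0 < δ := pos_iff_ne_zero.2 (by rintro rfl; simp at h)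
  choose β hβδ hβ using fun p : {x // ht x = η} × {x // ht x = η} ↦
    exists_lt_predsBelow_add_one (ht := ht) hδ p.1.1 p.2.1
  refine ⟨⨆ p, β p + 1, iSup_add_one_lt_of_lt_cof (by rwa [mk_prod, Cardinal.lift_id]) hβδ,
    fun x y hx hy hsub ↦ hβ (⟨x, hx⟩, ⟨y, hy⟩) (predsBelow_subset_of_le ?_ hsub)⟩
  exact Ordinal.le_iSup (fun p ↦ β p + 1) _

theorem IsHeightFunction.predsBelow_subset_Iio (hht : IsHeightFunction T ht)
    {γ δ : Ordinal.{u}} {x y z : T} (hdet : PredsDetermined ht (ht x) γ δ) (hzx : z < x)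
    (hzy : z < y) (hγz : γ ≤ ht z) (hxy : ht x < ht y) : predsBelow ht δ x ⊆ Iio y := by
  obtain ⟨w, hwy, hw⟩ := hht.surj_on y (ht x) hxy
  have hzw : z < w := hht.lt_of_ht_lt hzy hwy (hw ▸ hht.lt_of_lt hzx)
  have hsub := hdet x w rfl hw (hht.predsBelow_subset_of_lt_of_lt hzx hzw hγz)
  exact fun v hv ↦ (hsub hv).1.trans hwy

theorem IsHeightFunction.exists_cofinal_chain_of_coherent (hht : IsHeightFunction T ht)
    {Λ : Ordinal.{u}} {D : Set Ordinal.{u}} (hD : UnboundedBelow Λ D) (t : Ordinal.{u} → T)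
    (hle : ∀ δ ∈ D, δ < Λ → δ ≤ ht (t δ))
    (hcoh : ∀ δ ∈ D, δ < Λ → ∃ β < Λ, ∀ δ' ∈ D, β < δ' → δ' < Λ →
      predsBelow ht δ (t δ) ⊆ Iio (t δ')) :
    ∃ B : Set T, IsChain (· ≤ ·) B ∧ ∀ α < Λ, ∃ x ∈ B, ht x = α := by
  have hpred : ∀ α : Iio Λ, ∃ δ ∈ D, δ < Λ ∧ ∃ x ∈ predsBelow ht δ (t δ), ht x = α := by
    rintro ⟨α, hα⟩
    obtain ⟨δ, hδD, hαδ, hδΛ⟩ := hD α hα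
    obtain ⟨x, hx, rfl⟩ := hht.surj_on (t δ) α (hαδ.trans_le (hle δ hδD hδΛ))
    exact ⟨δ, hδD, hδΛ, x, ⟨hx, hαδ⟩, rfl⟩
  -- `IsHeightFunction` does not force predecessors of equal height to coincide, so the branch
  -- takes a single node on each level.
  choose d hdD hdΛ b hb hbα using hpred
  have hmono : StrictMono b := by
    intro α α' hαα'
    obtain ⟨β, hβΛ, hβ⟩ := hcoh _ (hdD α) (hdΛ α)
    obtain ⟨β', hβ'Λ, hβ'⟩ := hcoh _ (hdD α') (hdΛ α')
    obtain ⟨δ, hδD, hβδ, hδΛ⟩ := hD (max β β') (max_lt hβΛ hβ'Λ)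
    exact hht.lt_of_ht_lt (hβ δ hδD ((le_max_left _ _).trans_lt hβδ) hδΛ (hb α))
      (hβ' δ hδD ((le_max_right _ _).trans_lt hβδ) hδΛ (hb α')) (by rw [hbα, hbα]; exact hαα')
  exact ⟨range b, hmono.monotone.isChain_range,
    fun α hα ↦ ⟨b ⟨α, hα⟩, mem_range_self _, hbα _⟩⟩

theorem IsHeightFunction.exists_cofinal_chain (hht : IsHeightFunction T ht)
    {θ ν μ : Cardinal.{u}} (hθ : θ.IsRegular) (hν : ν.IsRegular) (hνθ : ν < θ) (hμν : μ < ν)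
    (hne : ∀ α < θ.ord, ∃ x, ht x = α) (hcard : ∀ α < θ.ord, #{x // ht x = α} < θ)
    (hsmall : UnboundedBelow θ.ord {α | #{x // ht x = α} ≤ μ}) :
    ∃ B : Set T, IsChain (· ≤ ·) B ∧ ∀ α < θ.ord, ∃ x ∈ B, ht x = α := by
  have : Nonempty T := (hne 0 hθ.ord_pos).nonempty
  choose! h hh_small hlt_h hhθ using hsmall
  choose! t ht_t using fun δ (hδ : δ < θ.ord) ↦ hne (h δ) (hhθ δ hδ)
  have hthreshold : ∀ δ < θ.ord, δ.cof = ν → ∃ γ < δ, PredsDetermined ht (h δ) γ δ := by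
    intro δ hδ hδν
    apply exists_predsDetermined
    rw [hδν]
    exact (mul_le_mul' (hh_small δ hδ) (hh_small δ hδ)).trans_lt
      (mul_lt_of_lt hν.aleph0_le hμν hμν)
  obtain ⟨γ, hγθ, hγ⟩ := exists_unboundedBelow_of_forall_cof_eq hθ hν hνθ _ hthreshold
  have hshadow : ∀ δ ∈ {δ | γ < δ ∧ PredsDetermined ht (h δ) γ δ}, δ < θ.ord →
      ∃ z : {x // ht x = γ}, z.1 < t δ := by
    rintro δ ⟨hγδ, -⟩ hδθ
    obtain ⟨z, hz, hzγ⟩ := hht.surj_on (t δ) γ (by rw [ht_t δ hδθ]; exact hγδ.trans (hlt_h δ hδθ))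
    exact ⟨⟨z, hzγ⟩, hz⟩
  obtain ⟨z, hz⟩ := hγ.exists_fiber (by simpa [hθ.cof_ord] using hcard γ hγθ) _ hshadow
  refine hht.exists_cofinal_chain_of_coherent hz t (fun δ _ hδθ ↦ (ht_t δ hδθ ▸ hlt_h δ hδθ).le) ?_
  rintro δ ⟨⟨-, hdet⟩, hzδ⟩ hδθ
  refine ⟨h δ, hhθ δ hδθ, fun δ' ⟨_, hzδ'⟩ hδδ' hδ'θ ↦
    hht.predsBelow_subset_Iio (ht_t δ hδθ ▸ hdet) hzδ hzδ' z.2.ge ?_⟩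
  rw [ht_t δ hδθ, ht_t δ' hδ'θ]
  exact hδδ'.trans (hlt_h δ' hδ'θ)

end Tree

theorem wellPruned_small_levels_cofinal_branch_general (κ : Cardinal) (hκ : ℵ₀ ≤ κ)
    {T : Type*} [PartialOrder T] (ht : T → Ordinal)
    (hht : IsHeightFunction T ht)
    (hlevels_ne : ∀ α < (Order.succ κ).ord, ∃ x : T, ht x = α)
    (hlevels_card : ∀ α : Ordinal, #{x : T // ht x = α} < κ) :
    ∃ B : Set T, IsChain (· ≤ ·) B ∧
      ∀ α < (Order.succ κ).ord, ∃ x ∈ B, ht x = α := by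
  have hreg : (succ κ).IsRegular := isRegular_succ hκ
  obtain ⟨μ, hμκ, hsmall⟩ :=
    exists_unboundedBelow_le_of_forall_lt hreg (lt_succ κ) _ hlevels_card
  obtain ⟨ν, hν, hμν, hνκ⟩ := Cardinal.exists_isRegular_lt_le hκ hμκ
  exact hht.exists_cofinal_chain hreg hν (hνκ.trans_lt (lt_succ κ)) hμν hlevels_ne
    (fun α _ ↦ (hlevels_card α).trans (lt_succ κ)) hsmall

/-- Let `κ` be an infinite cardinal and let `T` be a well-pruned tree of height `κ⁺`
(all elements have height `< κ⁺`, every level `α < κ⁺` is nonempty, and `T` is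
well-pruned) such that every level of `T` has cardinality strictly less than `κ`.
Then `T` has a cofinal branch: a chain `B ⊆ T` containing an element of every level
`α < κ⁺`. -/
theorem wellPruned_small_levels_cofinal_branch (κ : Cardinal) (hκ : ℵ₀ ≤ κ)
    {T : Type*} [PartialOrder T] (ht : T → Ordinal)
    (hht : IsHeightFunction T ht)
    (hlt : ∀ x : T, ht x < (Order.succ κ).ord)
    (hlevels_ne : ∀ α < (Order.succ κ).ord, ∃ x : T, ht x = α)
    (hlevels_card : ∀ α : Ordinal, #{x : T // ht x = α} < κ)
    (hpruned : ∀ x : T, ∀ α : Ordinal, ht x < α → α < (Order.succ κ).ord →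
      ∃ y : T, x < y ∧ ht y = α) :
    ∃ B : Set T, IsChain (· ≤ ·) B ∧
      ∀ α < (Order.succ κ).ord, ∃ x ∈ B, ht x = α :=
  wellPruned_small_levels_cofinal_branch_general κ hκ ht hht hlevels_ne hlevels_card
end

section
/- Let λ be a regular uncountable cardinal and let P be a partial order that is well-met λ-closed with glb. Let D ⊆ P be a subset such that any two elements of D have a greatest lower bound in P and this greatest lower bound belongs to D. Let 0 < δ < λ and let ⟨d_β : β < δ⟩ be a decreasing sequence of elements of D. Then the greatest lower bound of the sequence ⟨d_β : β < δ⟩ is compatible with every element of D. -/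
open Cardinal

/-- A partial order `P` is *well-met `λ`-closed with glb* if (i) any two compatible
elements of `P` (i.e. having a common lower bound) have a greatest lower bound in `P`,
and (ii) every decreasing sequence `⟨p_β : β < δ⟩` of elements of `P` of nonzero
length `δ < λ` has a greatest lower bound in `P`. -/
def IsWellMetClosedWithGlb (P : Type*) [PartialOrder P] (lam : Cardinal) : Prop :=
  (∀ p q : P, (∃ r : P, r ≤ p ∧ r ≤ q) → ∃ s : P, IsGLB {p, q} s) ∧
  (∀ δ : Ordinal, 0 < δ → δ < lam.ord → ∀ f : Ordinal → P,
    (∀ β γ : Ordinal, β ≤ γ → γ < δ → f γ ≤ f β) →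
    ∃ s : P, IsGLB (f '' Set.Iio δ) s)

/-- Let `λ` be a regular uncountable cardinal and let `P` be a partial order that is
well-met `λ`-closed with glb. Let `D ⊆ P` be a subset such that any two elements of
`D` have a greatest lower bound in `P` which belongs to `D`. Let `0 < δ < λ` and let
`⟨d_β : β < δ⟩` be a decreasing sequence of elements of `D`. Then the greatest lower
bound of the sequence is compatible with every element of `D` (i.e. has a common
lower bound in `P` with every element of `D`). -/
theorem glb_of_decreasing_sequence_compatible
    {P : Type*} [PartialOrder P] (lam : Cardinal)
    (hreg : lam.IsRegular) (hunc : ℵ₀ < lam)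
    (hP : IsWellMetClosedWithGlb P lam)
    (D : Set P)
    (hglb : ∀ p ∈ D, ∀ q ∈ D, ∃ s ∈ D, IsGLB {p, q} s)
    (δ : Ordinal) (hδ0 : 0 < δ) (hδ : δ < lam.ord)
    (d : Ordinal → P) (hd : ∀ β < δ, d β ∈ D)
    (hdec : ∀ β γ : Ordinal, β ≤ γ → γ < δ → d γ ≤ d β)
    (s : P) (hs : IsGLB (d '' Set.Iio δ) s) :
    ∀ q ∈ D, ∃ r : P, r ≤ s ∧ r ≤ q := by
  intro q hq
  -- choose pointwise glbs g β of {d β, q}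
  have h : ∀ β : Ordinal, ∃ g : P, β < δ → g ∈ D ∧ IsGLB {d β, q} g := by
    intro β
    by_cases hβ : β < δ
    · obtain ⟨g, hgD, hg⟩ := hglb (d β) (hd β hβ) q hq
      exact ⟨g, fun _ => ⟨hgD, hg⟩⟩
    · exact ⟨q, fun h' => absurd h' hβ⟩
  choose g hg using h
  have hgd : ∀ β, β < δ → g β ≤ d β := fun β hβ =>
    (hg β hβ).2.1 (Set.mem_insert _ _)
  have hgq : ∀ β, β < δ → g β ≤ q := fun β hβ =>
    (hg β hβ).2.1 (Set.mem_insert_of_mem _ rfl)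
  have hdecg : ∀ β γ : Ordinal, β ≤ γ → γ < δ → g γ ≤ g β := by
    intro β γ hβγ hγ
    have hβ : β < δ := lt_of_le_of_lt hβγ hγ
    refine (hg β hβ).2.2 ?_
    rintro x (rfl | rfl)
    · exact le_trans (hgd γ hγ) (hdec β γ hβγ hγ)
    · exact hgq γ hγ
  obtain ⟨t, ht⟩ := hP.2 δ hδ0 hδ g hdecg
  refine ⟨t, ?_, ?_⟩
  · refine hs.2 ?_
    rintro x ⟨β, hβ, rfl⟩
    exact le_trans (ht.1 ⟨β, hβ, rfl⟩) (hgd β hβ)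
  · exact le_trans (ht.1 ⟨0, hδ0, rfl⟩) (hgq 0 hδ0)
end
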